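/- Let K_x = U_x Λ_x U_xᵀ with U_x orthogonal and Λ_x diagonal, Σ a diagonal matrix with positive diagonal entries, and Σ^{-1/2} K_f Σ^{-1/2} = V_f Λ_f V_fᵀ with V_f orthogonal and Λ_f diagonal. Then K_x ⊗ K_f + I_N ⊗ Σ = U (Λ_x ⊗ Λ_f + I_{NM}) Uᵀ where U = U_x ⊗ (Σ^{1/2} V_f). -/

import Mathlib

/-!
With `S = Σ^{1/2}` and `B = S V_f`, the hypothesis on `K_f` gives `K_f = B Λ_f Bᵀ`, while
orthogonality of `V_f` gives `B Bᵀ = Σ`. By the mixed-product rule, conjugating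
`Λ_x ⊗ Λ_f + I` by `U_x ⊗ B` yields `(U_x Λ_x U_xᵀ) ⊗ (B Λ_f Bᵀ) + (U_x U_xᵀ) ⊗ (B Bᵀ)`.
-/

open Matrix Kronecker

namespace Matrix

variable {m n : Type*} [Fintype m] [Fintype n] [DecidableEq m] [DecidableEq n]

theorem kronecker_mul_kronecker_add_one_mul_transpose {R : Type*} [CommRing R]
    (A C : Matrix m m R) (B D : Matrix n n R) :
    (A ⊗ₖ B) * (C ⊗ₖ D + 1) * (A ⊗ₖ B)ᵀ =
      (A * C * Aᵀ) ⊗ₖ (B * D * Bᵀ) + (A * Aᵀ) ⊗ₖ (B * Bᵀ) := by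
  rw [Matrix.mul_add, mul_one, Matrix.add_mul, ← kroneckerMap_transpose,
    ← mul_kronecker_mul, ← mul_kronecker_mul, ← mul_kronecker_mul]

theorem eq_diagonal_mul_mul_diagonal {K : Type*} [Field K] {d : n → K} (hd : ∀ i, d i ≠ 0)
    {A X : Matrix n n K} (h : diagonal d⁻¹ * A * diagonal d⁻¹ = X) :
    A = diagonal d * X * diagonal d := by
  have hinv : diagonal d * diagonal d⁻¹ = 1 := by
    rw [diagonal_mul_diagonal, ← diagonal_one]
    exact congrArg diagonal (funext fun i => mul_inv_cancel₀ (hd i))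
  have hinv' : diagonal d⁻¹ * diagonal d = 1 := by
    rw [diagonal_mul_diagonal, ← diagonal_one]
    exact congrArg diagonal (funext fun i => inv_mul_cancel₀ (hd i))
  calc A = diagonal d * diagonal d⁻¹ * A * (diagonal d⁻¹ * diagonal d) := by
        rw [hinv, hinv', one_mul, mul_one]
    _ = diagonal d * X * diagonal d := by rw [← h]; simp only [Matrix.mul_assoc]

end Matrix

theorem kron_cov_eigendecomp (N M : ℕ)
    (Ux : Matrix (Fin N) (Fin N) ℝ) (hUx : Ux * Uxᵀ = 1 ∧ Uxᵀ * Ux = 1)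
    (lx : Fin N → ℝ) (Kx : Matrix (Fin N) (Fin N) ℝ)
    (hKx : Kx = Ux * diagonal lx * Uxᵀ)
    (σ : Fin M → ℝ) (hσ : ∀ m, 0 < σ m)
    (Vf : Matrix (Fin M) (Fin M) ℝ) (hVf : Vf * Vfᵀ = 1 ∧ Vfᵀ * Vf = 1)
    (lf : Fin M → ℝ) (Kf : Matrix (Fin M) (Fin M) ℝ)
    (hKf : diagonal (fun m => (Real.sqrt (σ m))⁻¹) * Kf *
             diagonal (fun m => (Real.sqrt (σ m))⁻¹) = Vf * diagonal lf * Vfᵀ) :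
    Kx ⊗ₖ Kf + (1 : Matrix (Fin N) (Fin N) ℝ) ⊗ₖ diagonal σ =
      (Ux ⊗ₖ (diagonal (fun m => Real.sqrt (σ m)) * Vf)) *
        (diagonal lx ⊗ₖ diagonal lf + 1) *
      (Ux ⊗ₖ (diagonal (fun m => Real.sqrt (σ m)) * Vf))ᵀ := by
  set S := diagonal fun m => Real.sqrt (σ m)
  have hST : Sᵀ = S := diagonal_transpose _
  have hKf_conj : Kf = S * (Vf * diagonal lf * Vfᵀ) * S :=
    eq_diagonal_mul_mul_diagonal (fun m => (Real.sqrt_pos.mpr (hσ m)).ne') hKf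
  have hBDBt : (S * Vf) * diagonal lf * (S * Vf)ᵀ = Kf := by
    rw [hKf_conj, transpose_mul, hST]
    simp only [Matrix.mul_assoc]
  have hBBt : (S * Vf) * (S * Vf)ᵀ = diagonal σ := by
    rw [transpose_mul, hST, Matrix.mul_assoc, ← Matrix.mul_assoc Vf, hVf.1, Matrix.one_mul,
      diagonal_mul_diagonal]
    exact congrArg diagonal (funext fun m => Real.mul_self_sqrt (hσ m).le)
  rw [kronecker_mul_kronecker_add_one_mul_transpose, hUx.1, hBDBt, hBBt, hKx]
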